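/- arXiv:2008.05519 — 2 statements merged into one kernel-verified Lean document; each statement's English description precedes it below -/
import Mathlib

section
/- Let n, k, N, d be positive integers and L, M, M' > 0. Let φ : ℝⁿ × (ℝ^d)^N → ℝ^k satisfy max_{1≤i≤k} |φ^i(x,α)|² ≤ M for all (x,α) (where φ^i is the i-th component of φ) and |φ(x,α₁) − φ(x,α₂)|² ≤ L|α₁−α₂|² for all x, α₁, α₂; let f = (f¹,…,f^N) : ℝⁿ × (ℝ^d)^N → ℝ^N satisfy |f(x,α₁) − f(x,α₂)|² ≤ L|α₁−α₂|². For tuples α = (α¹,…,α^N), β = (β¹,…,β^N) ∈ (ℝ^d)^N and i ∈ {1,…,N}, write (βⁱ; α^{−i}) for the tuple obtained from α by replacing its i-th block with βⁱ. Then there exists a constant C > 0, depending only on L, M, M' and k, such that for all x ∈ ℝⁿ, all α, β, γ ∈ (ℝ^d)^N, and all matrices w, z ∈ ℝ^{k×N} with ‖z‖_S² ≤ M', one has Σ_{i=1}^N | φ(x,(βⁱ;α^{−i}))·wⁱ + fⁱ(x,(βⁱ;α^{−i})) − φ(x,γ)·zⁱ − fⁱ(x,γ) |² ≤ C( ‖w−z‖_F²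 + |α−γ|² + |β−γ|² ). -/
open scoped BigOperators

/-- The Frobenius norm of a real `k × N` matrix. -/
noncomputable def frobNorm {k N : ℕ} (z : Matrix (Fin k) (Fin N) ℝ) : ℝ :=
  Real.sqrt (∑ j : Fin k, ∑ i : Fin N, (z j i) ^ 2)

/-- The spectral (ℓ²-operator) norm of a real `k × N` matrix. -/
noncomputable def specNorm {k N : ℕ} (z : Matrix (Fin k) (Fin N) ℝ) : ℝ :=
  ‖LinearMap.toContinuousLinearMap (Matrix.toEuclideanLin (𝕜 := ℝ) z)‖

/-!
Write `Aᵢ = (βⁱ; α⁻ⁱ)` and split the `i`-th difference as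
`φ(Aᵢ)·(wⁱ - zⁱ) + (φ(Aᵢ) - φ(α))·zⁱ + (φ(α) - φ(γ))·zⁱ + (fⁱ(Aᵢ) - fⁱ(α)) + (fⁱ(α) - fⁱ(γ))`.
The first piece is bounded by `k M |wⁱ - zⁱ|²`. Since `|Aᵢ - α| = |βⁱ - αⁱ|`, the Lipschitz bounds
control the second and fourth pieces by quantities that sum to `|β - α|²`. The third and fifth
involve only `α` and `γ`; summed over `i` their squares are at most `‖zᵀ‖_S² |φ(α) - φ(γ)|²`
and `|f(α) - f(γ)|²`, and `‖zᵀ‖_S = ‖z‖_S`. Passing through `α` rather than comparing `Aᵢ`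
with `γ` directly is what keeps the constant independent of `N`.
-/

open Finset
open scoped Matrix

section MatrixNorms

open scoped Matrix.Norms.L2Operator

variable {k N : ℕ}

lemma specNorm_eq_l2_opNorm (z : Matrix (Fin k) (Fin N) ℝ) : specNorm z = ‖z‖ := rfl

lemma specNorm_transpose (z : Matrix (Fin k) (Fin N) ℝ) : specNorm zᵀ = specNorm z := by
  rw [specNorm_eq_l2_opNorm, specNorm_eq_l2_opNorm, ← Matrix.conjTranspose_eq_transpose_of_trivial,
    Matrix.l2_opNorm_conjTranspose]

lemma sum_sq_mulVec_le (z : Matrix (Fin k) (Fin N) ℝ) (v : Fin N → ℝ) :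
    ∑ j, (z *ᵥ v) j ^ 2 ≤ specNorm z ^ 2 * ∑ i, v i ^ 2 := by
  have h := z.l2_opNorm_mulVec (WithLp.toLp 2 v)
  rw [← specNorm_eq_l2_opNorm] at h
  have h2 := pow_le_pow_left₀ (norm_nonneg _) h 2
  simpa [mul_pow, EuclideanSpace.real_norm_sq_eq] using h2

lemma sum_sq_vecMul_le (z : Matrix (Fin k) (Fin N) ℝ) (v : Fin k → ℝ) :
    ∑ i, (v ᵥ* z) i ^ 2 ≤ specNorm z ^ 2 * ∑ j, v j ^ 2 := by
  simpa [← Matrix.mulVec_transpose, specNorm_transpose] using sum_sq_mulVec_le zᵀ v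

lemma sum_sq_col_le (z : Matrix (Fin k) (Fin N) ℝ) (i : Fin N) :
    ∑ j, z j i ^ 2 ≤ specNorm z ^ 2 := by
  simpa [Pi.single_apply] using sum_sq_mulVec_le z (Pi.single i 1)

lemma frobNorm_sq (z : Matrix (Fin k) (Fin N) ℝ) :
    frobNorm z ^ 2 = ∑ j, ∑ i, z j i ^ 2 :=
  Real.sq_sqrt (by positivity)

lemma sq_sum_mul_le_specNorm_sq (v : Fin k → ℝ) (z : Matrix (Fin k) (Fin N) ℝ)
    (i : Fin N) : (∑ j, v j * z j i) ^ 2 ≤ specNorm z ^ 2 * ∑ j, v j ^ 2 :=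
  calc (∑ j, v j * z j i) ^ 2 ≤ (∑ j, v j ^ 2) * ∑ j, z j i ^ 2 :=
        sum_mul_sq_le_sq_mul_sq _ _ _
    _ ≤ specNorm z ^ 2 * ∑ j, v j ^ 2 := by
        rw [mul_comm]; gcongr; exact sum_sq_col_le z i

lemma sum_sq_sum_mul_le_frobNorm_sq {M : ℝ} (v : Fin N → Fin k → ℝ)
    (hv : ∀ i j, v i j ^ 2 ≤ M) (u : Matrix (Fin k) (Fin N) ℝ) :
    ∑ i, (∑ j, v i j * u j i) ^ 2 ≤ k * M * frobNorm u ^ 2 := by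
  rw [frobNorm_sq, sum_comm, mul_sum]
  gcongr with i
  calc (∑ j, v i j * u j i) ^ 2 ≤ (∑ j, v i j ^ 2) * ∑ j, u j i ^ 2 :=
        sum_mul_sq_le_sq_mul_sq _ _ _
    _ ≤ k * M * ∑ j, u j i ^ 2 := by
        gcongr
        simpa using sum_le_sum fun j (_ : j ∈ univ) => hv i j

end MatrixNorms

lemma PiLp.norm_toLp_update_sub {ι : Type*} [Fintype ι] [DecidableEq ι] {β : ι → Type*}
    [∀ i, SeminormedAddCommGroup (β i)] (α : PiLp 2 β) (i : ι) (b : β i) :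
    ‖WithLp.toLp 2 (Function.update α i b) - α‖ = ‖b - α i‖ := by
  have : WithLp.toLp 2 (Function.update α i b) - α = PiLp.single 2 i (b - α i) := by
    ext j
    rcases eq_or_ne j i with rfl | hj
    · simp
    · simp [hj]
  rw [this, PiLp.norm_single]

lemma sq_add_five_le (a b c d e : ℝ) :
    (a + b + c + d + e) ^ 2 ≤ 5 * (a ^ 2 + b ^ 2 + c ^ 2 + d ^ 2 + e ^ 2) := by
  simpa [Fin.sum_univ_five, add_assoc] using
    sq_sum_le_card_mul_sum_sq (s := univ) (f := ![a, b, c, d, e])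

lemma EuclideanSpace.sq_apply_le_norm_sq {ι : Type*} [Fintype ι] (x : EuclideanSpace ℝ ι)
    (i : ι) : x i ^ 2 ≤ ‖x‖ ^ 2 := by
  simpa using pow_le_pow_left₀ (norm_nonneg _) (PiLp.norm_apply_le x i) 2

lemma sum_norm_sq_update_sub_le {ι : Type*} [Fintype ι] [DecidableEq ι] {E : ι → Type*}
    [∀ i, SeminormedAddCommGroup (E i)] {F : Type*} [SeminormedAddCommGroup F] {L : ℝ}
    {g : PiLp 2 E → F} (hg : ∀ a b, ‖g a - g b‖ ^ 2 ≤ L * ‖a - b‖ ^ 2) (α β : PiLp 2 E) :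
    ∑ i, ‖g (WithLp.toLp 2 (Function.update α i (β i))) - g α‖ ^ 2 ≤ L * ‖β - α‖ ^ 2 :=
  calc _ ≤ ∑ i, L * ‖β i - α i‖ ^ 2 :=
        sum_le_sum fun i _ => PiLp.norm_toLp_update_sub α i (β i) ▸ hg _ α
    _ = L * ‖β - α‖ ^ 2 := by simp [PiLp.norm_sq_eq_of_L2, mul_sum]

lemma norm_sub_sq_le_two_mul {G : Type*} [SeminormedAddCommGroup G] (a b c : G) :
    ‖a - c‖ ^ 2 ≤ 2 * (‖a - b‖ ^ 2 + ‖c - b‖ ^ 2) := by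
  have h : ‖a - c‖ ≤ ‖a - b‖ + ‖c - b‖ := by
    simpa [norm_sub_rev b c] using norm_sub_le_norm_sub_add_norm_sub a b c
  exact (pow_le_pow_left₀ (norm_nonneg _) h 2).trans add_sq_le

theorem sum_sq_hamiltonian_sub_le {k N : ℕ} {E : Fin N → Type*}
    [∀ i, SeminormedAddCommGroup (E i)] {L M M' : ℝ} (hL : 0 ≤ L) (hM : 0 ≤ M)
    (φ : PiLp 2 E → EuclideanSpace ℝ (Fin k)) (f : PiLp 2 E → EuclideanSpace ℝ (Fin N))
    (hφM : ∀ a j, φ a j ^ 2 ≤ M) (hφ : ∀ a b, ‖φ a - φ b‖ ^ 2 ≤ L * ‖a - b‖ ^ 2)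
    (hf : ∀ a b, ‖f a - f b‖ ^ 2 ≤ L * ‖a - b‖ ^ 2) (α β γ : PiLp 2 E)
    (w z : Matrix (Fin k) (Fin N) ℝ) (hz : specNorm z ^ 2 ≤ M') :
    ∑ i, ((∑ j, φ (WithLp.toLp 2 (Function.update α i (β i))) j * w j i)
        + f (WithLp.toLp 2 (Function.update α i (β i))) i
        - (∑ j, φ γ j * z j i) - f γ i) ^ 2
      ≤ 5 * (k * M + 3 * L * (M' + 1)) * (frobNorm (w - z) ^ 2 + ‖α - γ‖ ^ 2 + ‖β - γ‖ ^ 2) := by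
  set A : Fin N → PiLp 2 E := fun i => WithLp.toLp 2 (Function.update α i (β i))
  have hsplit : ∀ i, (∑ j, φ (A i) j * w j i) + f (A i) i - (∑ j, φ γ j * z j i) - f γ i
      = (∑ j, φ (A i) j * (w - z) j i) + (∑ j, (φ (A i) - φ α) j * z j i)
        + (∑ j, (φ α - φ γ) j * z j i) + (f (A i) - f α) i + (f α - f γ) i := by
    intro i
    simp only [Matrix.sub_apply, PiLp.sub_apply, mul_sub, sub_mul, sum_sub_distrib]
    ring
  have ha := sum_sq_sum_mul_le_frobNorm_sq (fun i j => φ (A i) j) (fun i => hφM (A i)) (w - z)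
  have hb : ∑ i, (∑ j, (φ (A i) - φ α) j * z j i) ^ 2 ≤ M' * (L * ‖β - α‖ ^ 2) :=
    calc _ ≤ ∑ i, M' * ‖φ (A i) - φ α‖ ^ 2 := by
          gcongr with i
          rw [EuclideanSpace.real_norm_sq_eq]
          exact (sq_sum_mul_le_specNorm_sq _ z i).trans (by gcongr)
      _ ≤ M' * (L * ‖β - α‖ ^ 2) := by
          rw [← mul_sum]
          gcongr
          · exact (sq_nonneg _).trans hz
          · exact sum_norm_sq_update_sub_le hφ α β
  have hc : ∑ i, (∑ j, (φ α - φ γ) j * z j i) ^ 2 ≤ M' * (L * ‖α - γ‖ ^ 2) :=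
    calc _ ≤ specNorm z ^ 2 * ∑ j, (φ α - φ γ) j ^ 2 := sum_sq_vecMul_le z _
      _ ≤ M' * (L * ‖α - γ‖ ^ 2) := by
          rw [← EuclideanSpace.real_norm_sq_eq]
          exact mul_le_mul hz (hφ α γ) (sq_nonneg _) ((sq_nonneg _).trans hz)
  have hd : ∑ i, (f (A i) - f α) i ^ 2 ≤ L * ‖β - α‖ ^ 2 :=
    (sum_le_sum fun i _ => EuclideanSpace.sq_apply_le_norm_sq _ i).trans
      (sum_norm_sq_update_sub_le hf α β)
  have he : ∑ i, (f α - f γ) i ^ 2 ≤ L * ‖α - γ‖ ^ 2 :=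
    (EuclideanSpace.real_norm_sq_eq _).symm.le.trans (hf α γ)
  have hβα := norm_sub_sq_le_two_mul β γ α
  have hM' : 0 ≤ M' := (sq_nonneg _).trans hz
  calc _ ≤ ∑ i, 5 * ((∑ j, φ (A i) j * (w - z) j i) ^ 2 + (∑ j, (φ (A i) - φ α) j * z j i) ^ 2
          + (∑ j, (φ α - φ γ) j * z j i) ^ 2 + (f (A i) - f α) i ^ 2 + (f α - f γ) i ^ 2) :=
        sum_le_sum fun i _ => hsplit i ▸ sq_add_five_le _ _ _ _ _
    _ ≤ 5 * (k * M * frobNorm (w - z) ^ 2 + M' * (L * ‖β - α‖ ^ 2) + M' * (L * ‖α - γ‖ ^ 2)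
          + L * ‖β - α‖ ^ 2 + L * ‖α - γ‖ ^ 2) := by
        simp only [← mul_sum, sum_add_distrib]
        gcongr
    _ ≤ _ := by
        have hLM' : 0 ≤ L * M' + L := by positivity
        have hkM : 0 ≤ k * M := by positivity
        linarith [mul_le_mul_of_nonneg_left hβα hLM',
          mul_nonneg hLM' (sq_nonneg (frobNorm (w - z))), mul_nonneg hLM' (sq_nonneg ‖β - γ‖),
          mul_nonneg hkM (sq_nonneg ‖α - γ‖), mul_nonneg hkM (sq_nonneg ‖β - γ‖)]

theorem stmt2_general (k : ℕ) (L M M' : ℝ) (hL : 0 < L) (hM : 0 < M) (hM' : 0 < M') :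
    ∃ C > 0, ∀ (n N d : ℕ), 0 < n → 0 < N → 0 < d →
      ∀ (φ : EuclideanSpace ℝ (Fin n) → (PiLp 2 fun _ : Fin N => EuclideanSpace ℝ (Fin d)) →
            EuclideanSpace ℝ (Fin k))
        (f : EuclideanSpace ℝ (Fin n) → (PiLp 2 fun _ : Fin N => EuclideanSpace ℝ (Fin d)) →
            EuclideanSpace ℝ (Fin N)),
      (∀ x α (j : Fin k), (φ x α j) ^ 2 ≤ M) →
      (∀ x α₁ α₂, ‖φ x α₁ - φ x α₂‖ ^ 2 ≤ L * ‖α₁ - α₂‖ ^ 2) →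
      (∀ x α₁ α₂, ‖f x α₁ - f x α₂‖ ^ 2 ≤ L * ‖α₁ - α₂‖ ^ 2) →
      ∀ (x : EuclideanSpace ℝ (Fin n))
        (α β γ : PiLp 2 fun _ : Fin N => EuclideanSpace ℝ (Fin d))
        (w z : Matrix (Fin k) (Fin N) ℝ),
      specNorm z ^ 2 ≤ M' →
      ∑ i : Fin N,
        ((∑ j : Fin k, φ x (WithLp.toLp 2 (Function.update α i (β i))) j * w j i)
            + f x (WithLp.toLp 2 (Function.update α i (β i))) i
          - (∑ j : Fin k, φ x γ j * z j i) - f x γ i) ^ 2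
        ≤ C * (frobNorm (w - z) ^ 2 + ‖α - γ‖ ^ 2 + ‖β - γ‖ ^ 2) := by
  refine ⟨5 * (k * M + 3 * L * (M' + 1)),
    mul_pos (by norm_num) (add_pos_of_nonneg_of_pos (mul_nonneg k.cast_nonneg hM.le)
      (mul_pos (mul_pos three_pos hL) (by linarith))), ?_⟩
  intro n N d _ _ _ φ f hφM hφ hf x α β γ w z hz
  exact sum_sq_hamiltonian_sub_le hL.le hM.le (φ x) (f x) (hφM x) (hφ x) (hf x) α β γ w z hz

/-- The key pointwise estimate on the vector of Hamiltonian differences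
arising in the fictitious-play iteration: with `Hⁱ(x,α,pⁱ) = φ(x,α)·pⁱ + fⁱ(x,α)`, there is a
constant `C` depending only on `L, M, M', k` such that
`∑ᵢ |Hⁱ(x,(βⁱ;α⁻ⁱ),wⁱ) − Hⁱ(x,γ,zⁱ)|² ≤ C(‖w−z‖_F² + |α−γ|² + |β−γ|²)`
whenever `‖z‖_S² ≤ M'`. Tuples in `(ℝ^d)^N` are modeled as `PiLp 2` so that the norm is the
Euclidean norm of the full tuple, and `(βⁱ;α⁻ⁱ) = Function.update α i (β i)`. -/
theorem stmt2 (k : ℕ) (hk : 0 < k) (L M M' : ℝ) (hL : 0 < L) (hM : 0 < M) (hM' : 0 < M') :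
    ∃ C > 0, ∀ (n N d : ℕ), 0 < n → 0 < N → 0 < d →
      ∀ (φ : EuclideanSpace ℝ (Fin n) → (PiLp 2 fun _ : Fin N => EuclideanSpace ℝ (Fin d)) →
            EuclideanSpace ℝ (Fin k))
        (f : EuclideanSpace ℝ (Fin n) → (PiLp 2 fun _ : Fin N => EuclideanSpace ℝ (Fin d)) →
            EuclideanSpace ℝ (Fin N)),
      (∀ x α (j : Fin k), (φ x α j) ^ 2 ≤ M) →
      (∀ x α₁ α₂, ‖φ x α₁ - φ x α₂‖ ^ 2 ≤ L * ‖α₁ - α₂‖ ^ 2) →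
      (∀ x α₁ α₂, ‖f x α₁ - f x α₂‖ ^ 2 ≤ L * ‖α₁ - α₂‖ ^ 2) →
      ∀ (x : EuclideanSpace ℝ (Fin n))
        (α β γ : PiLp 2 fun _ : Fin N => EuclideanSpace ℝ (Fin d))
        (w z : Matrix (Fin k) (Fin N) ℝ),
      specNorm z ^ 2 ≤ M' →
      ∑ i : Fin N,
        ((∑ j : Fin k, φ x (WithLp.toLp 2 (Function.update α i (β i))) j * w j i)
            + f x (WithLp.toLp 2 (Function.update α i (β i))) i
          - (∑ j : Fin k, φ x γ j * z j i) - f x γ i) ^ 2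
        ≤ C * (frobNorm (w - z) ^ 2 + ‖α - γ‖ ^ 2 + ‖β - γ‖ ^ 2) :=
  stmt2_general k L M M' hL hM hM'
end

section
/- Let n and d be positive integers, L' > 0, and let μ be a measure on ℝ × ℝⁿ. Consider the real Hilbert space L²(μ; ℝ^d) of square-integrable ℝ^d-valued functions on ℝ × ℝⁿ, identified up to μ-almost-everywhere equality. Let N denote the set of those F ∈ L²(μ; ℝ^d) that admit a representative g : ℝ × ℝⁿ → ℝ^d satisfying, for all (t₁,x₁), (t₂,x₂) ∈ ℝ × ℝⁿ, |g(t₁,x₁) − g(t₂,x₂)|² ≤ L'(|t₁−t₂| + |x₁−x₂|²), and, for all (t,x) ∈ ℝ × ℝⁿ, |g(t,x)|² ≤ L'(1 + |x|²). Then N is a convex and closed subset of L²(μ; ℝ^d). -/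
/-!
Each instance of the two constraints on a representative `g` involves at most two values of `g`
and is a sublevel set of the convex function `‖·‖²` composed with a linear evaluation, so
they cut out a convex set of functions which is closed in the topology of pointwise convergence.
The growth bound confines every value `g z` to a closed ball, so by Tychonoff this set is even
compact. If `Fₖ → F` in `L²`, a subsequence converges almost everywhere; a cluster point, for
pointwise convergence, of the corresponding representatives is then a representative of `F`.
-/

open MeasureTheory Filter Topology

/-- The class `𝒩` of policy functions in `L²(μ; ℝ^d)` admitting a representative that is
jointly 1/2-Hölder in time and Lipschitz in space (with squared modulus
`L'(|t₁−t₂| + |x₁−x₂|²)`) and satisfies the linear growth bound `|g(t,x)|² ≤ L'(1+|x|²)`. -/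
def NclassSet (n d : ℕ) (L' : ℝ) (μ : Measure (ℝ × EuclideanSpace ℝ (Fin n))) :
    Set (Lp (EuclideanSpace ℝ (Fin d)) 2 μ) :=
  {F | ∃ g : ℝ × EuclideanSpace ℝ (Fin n) → EuclideanSpace ℝ (Fin d),
    (∀ᵐ z ∂μ, F z = g z) ∧
    (∀ (t₁ t₂ : ℝ) (x₁ x₂ : EuclideanSpace ℝ (Fin n)),
      ‖g (t₁, x₁) - g (t₂, x₂)‖ ^ 2 ≤ L' * (|t₁ - t₂| + ‖x₁ - x₂‖ ^ 2)) ∧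
    (∀ (t : ℝ) (x : EuclideanSpace ℝ (Fin n)),
      ‖g (t, x)‖ ^ 2 ≤ L' * (1 + ‖x‖ ^ 2))}

theorem MapClusterPt.eq_of_tendsto {α X : Type*} [TopologicalSpace X] [T2Space X]
    {l : Filter α} {u : α → X} {x y : X} (hx : MapClusterPt x l u) (hy : Tendsto u l (𝓝 y)) :
    x = y := by
  by_contra hne
  exact (hx.clusterPt.mono hy).neBot.ne (disjoint_nhds_nhds.2 hne).eq_bot

theorem norm_sq_convex_combination_le {E : Type*} [SeminormedAddCommGroup E] [NormedSpace ℝ E]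
    {u v : E} {a b M : ℝ} (ha : 0 ≤ a) (hb : 0 ≤ b) (hab : a + b = 1)
    (hu : ‖u‖ ^ 2 ≤ M) (hv : ‖v‖ ^ 2 ≤ M) : ‖a • u + b • v‖ ^ 2 ≤ M :=
  (((convexOn_norm convex_univ).pow (fun _ _ ↦ norm_nonneg _) 2).convex_le M
    ⟨trivial, hu⟩ ⟨trivial, hv⟩ ha hb hab).2

section BoundedModulusClass

variable {X E : Type*} [NormedAddCommGroup E]

def boundedModulusClass (ω : X → X → ℝ) (β : X → ℝ) : Set (X → E) :=
  {g | (∀ z w, ‖g z - g w‖ ^ 2 ≤ ω z w) ∧ ∀ z, ‖g z‖ ^ 2 ≤ β z}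

theorem convex_boundedModulusClass [NormedSpace ℝ E] (ω : X → X → ℝ) (β : X → ℝ) :
    Convex ℝ (boundedModulusClass ω β : Set (X → E)) := by
  rintro g₁ ⟨hmod₁, hβ₁⟩ g₂ ⟨hmod₂, hβ₂⟩ a b ha hb hab
  refine ⟨fun z w ↦ ?_, fun z ↦ norm_sq_convex_combination_le ha hb hab (hβ₁ z) (hβ₂ z)⟩
  have hsub : (a • g₁ + b • g₂) z - (a • g₁ + b • g₂) w
      = a • (g₁ z - g₁ w) + b • (g₂ z - g₂ w) := by
    simp only [Pi.add_apply, Pi.smul_apply]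
    module
  rw [hsub]
  exact norm_sq_convex_combination_le ha hb hab (hmod₁ z w) (hmod₂ z w)

theorem isClosed_boundedModulusClass (ω : X → X → ℝ) (β : X → ℝ) :
    IsClosed (boundedModulusClass ω β : Set (X → E)) := by
  simp only [boundedModulusClass, Set.ofPred_and, Set.ofPred_forall]
  exact .inter (isClosed_iInter fun z ↦ isClosed_iInter fun w ↦
      isClosed_le (by fun_prop) continuous_const)
    (isClosed_iInter fun z ↦ isClosed_le (by fun_prop) continuous_const)

theorem boundedModulusClass_subset_pi (ω : X → X → ℝ) (β : X → ℝ) :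
    (boundedModulusClass ω β : Set (X → E)) ⊆
      Set.univ.pi fun z ↦ Metric.closedBall 0 (Real.sqrt (β z)) :=
  fun _ hg z _ ↦ by simpa using Real.le_sqrt_of_sq_le (hg.2 z)

theorem isCompact_boundedModulusClass [ProperSpace E] (ω : X → X → ℝ) (β : X → ℝ) :
    IsCompact (boundedModulusClass ω β : Set (X → E)) :=
  (isCompact_univ_pi fun _ ↦ isCompact_closedBall _ _).of_isClosed_subset
    (isClosed_boundedModulusClass ω β) (boundedModulusClass_subset_pi ω β)

end BoundedModulusClass

section ClassesWithRepIn

variable {X E : Type*} [MeasurableSpace X] [NormedAddCommGroup E] {p : ENNReal} {μ : Measure X}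

variable (p μ) in
def classesWithRepIn (S : Set (X → E)) : Set (Lp E p μ) :=
  {F | ∃ g, F =ᵐ[μ] g ∧ g ∈ S}

theorem convex_classesWithRepIn [NormedSpace ℝ E] {S : Set (X → E)} (hS : Convex ℝ S) :
    Convex ℝ (classesWithRepIn p μ S) := by
  rintro F₁ ⟨g₁, hF₁, hg₁⟩ F₂ ⟨g₂, hF₂, hg₂⟩ a b ha hb hab
  refine ⟨a • g₁ + b • g₂, ?_, hS hg₁ hg₂ ha hb hab⟩
  filter_upwards [Lp.coeFn_add (a • F₁) (b • F₂), Lp.coeFn_smul a F₁, Lp.coeFn_smul b F₂,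
    hF₁, hF₂] with z hadd hsmul₁ hsmul₂ h₁ h₂
  rw [hadd, Pi.add_apply, hsmul₁, hsmul₂, Pi.smul_apply, Pi.smul_apply, h₁, h₂]
  rfl

theorem isClosed_classesWithRepIn [Fact (1 ≤ p)] {S : Set (X → E)} (hS : IsCompact S) :
    IsClosed (classesWithRepIn p μ S) := by
  refine IsSeqClosed.isClosed fun u F hu hF ↦ ?_
  choose g hug hgS using hu
  obtain ⟨ns, -, hns⟩ := (tendstoInMeasure_of_tendsto_Lp hF).exists_seq_tendsto_ae
  obtain ⟨G, hGS, hG⟩ := hS.exists_mapClusterPt (f := atTop) (u := g ∘ ns)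
    (tendsto_principal.2 (.of_forall fun k ↦ hgS (ns k)))
  refine ⟨G, ?_, hGS⟩
  filter_upwards [hns, ae_all_iff.2 hug] with z hz hugz
  have hGz : MapClusterPt (G z) atTop fun k ↦ g (ns k) z :=
    hG.continuousAt_comp (continuous_apply z).continuousAt
  exact (hGz.eq_of_tendsto (by simpa only [hugz] using hz)).symm

end ClassesWithRepIn

theorem stmt5_general (n d : ℕ) (L' : ℝ)
    (μ : Measure (ℝ × EuclideanSpace ℝ (Fin n))) :
    Convex ℝ (NclassSet n d L' μ) ∧ IsClosed (NclassSet n d L' μ) := by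
  have hN : NclassSet n d L' μ = classesWithRepIn 2 μ (boundedModulusClass
      (fun z w ↦ L' * (|z.1 - w.1| + ‖z.2 - w.2‖ ^ 2)) fun z ↦ L' * (1 + ‖z.2‖ ^ 2)) := by
    ext F
    simp only [NclassSet, classesWithRepIn, boundedModulusClass, Set.mem_ofPred_eq, Prod.forall]
    exact exists_congr fun g ↦ and_congr_right fun _ ↦ and_congr_left fun _ ↦
      ⟨fun h t₁ x₁ t₂ x₂ ↦ h t₁ t₂ x₁ x₂, fun h t₁ t₂ x₁ x₂ ↦ h t₁ x₁ t₂ x₂⟩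
  rw [hN]
  exact ⟨convex_classesWithRepIn (convex_boundedModulusClass _ _),
    isClosed_classesWithRepIn (isCompact_boundedModulusClass _ _)⟩

/-- The class `𝒩` is a convex and closed subset of the Hilbert space
`L²(μ; ℝ^d)` of square-integrable `ℝ^d`-valued functions on `ℝ × ℝⁿ`. -/
theorem stmt5 (n d : ℕ) (hn : 0 < n) (hd : 0 < d) (L' : ℝ) (hL' : 0 < L')
    (μ : Measure (ℝ × EuclideanSpace ℝ (Fin n))) :
    Convex ℝ (NclassSet n d L' μ) ∧ IsClosed (NclassSet n d L' μ) :=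
  stmt5_general n d L' μ
end
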